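/- Let A be a finite-dimensional Frobenius algebra over a field K with Frobenius comultiplication δ and counit ε. Let M be a right A-comodule with structure map ∇ : M → M ⊗ A, let m_∇ : M ⊗ A → M be the induced module structure (m_∇ = (id_M ⊗ ε) ∘ (id_M ⊗ μ) ∘ (∇ ⊗ id_A)), and let ∇_{m_∇} : M → M ⊗ A be the comodule structure induced from m_∇ (∇_{m_∇} = (m_∇ ⊗ id_A) ∘ (id_M ⊗ δ) ∘ (x ↦ x ⊗ 1_A)). Then ∇_{m_∇} = ∇. -/

import Mathlib

/-!
Write `δ 1 = ∑ pᵢ ⊗ qᵢ`. Since `δ` is left `A`-linear, `δ a = ∑ a pᵢ ⊗ qᵢ`. For `∇ x = ∑ xⱼ ⊗ aⱼ`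
we get `m_∇ (x ⊗ e) = ∑ ε (aⱼ e) xⱼ`, hence
`∇_{m_∇} x = ∑ⱼ xⱼ ⊗ ∑ᵢ ε (aⱼ pᵢ) qᵢ = ∑ⱼ xⱼ ⊗ (ε ⊗ id) (δ aⱼ) = ∑ⱼ xⱼ ⊗ aⱼ = ∇ x`
by the counit law.
-/

open TensorProduct

/-- The comodule structure map `∇_m = (m ⊗ id_A) ∘ (id_M ⊗ δ) ∘ (x ↦ x ⊗ 1_A)`
induced on a right `A`-module `(M, m)` by the Frobenius comultiplication `δ`. -/
noncomputable def nablaOf {K : Type*} [Field K] {A : Type*} [Ring A] [Algebra K A]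
    {M : Type*} [AddCommGroup M] [Module K M]
    (δ : A →ₗ[K] A ⊗[K] A) (m : M ⊗[K] A →ₗ[K] M) : M →ₗ[K] M ⊗[K] A :=
  (TensorProduct.map m (LinearMap.id : A →ₗ[K] A)) ∘ₗ
    (TensorProduct.assoc K M A A).symm.toLinearMap ∘ₗ
      (TensorProduct.map (LinearMap.id : M →ₗ[K] M) δ) ∘ₗ
        ((TensorProduct.mk K M A).flip 1)

/-- The module structure map `m_∇ = (id_M ⊗ ε) ∘ (id_M ⊗ μ) ∘ (∇ ⊗ id_A)`
induced on a right `A`-comodule `(M, ∇)` by the counit `ε` of the Frobenius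
comultiplication, with `μ : A ⊗ A → A` the multiplication. -/
noncomputable def modOf {K : Type*} [Field K] {A : Type*} [Ring A] [Algebra K A]
    {M : Type*} [AddCommGroup M] [Module K M]
    (ε : A →ₗ[K] K) (co : M →ₗ[K] M ⊗[K] A) : M ⊗[K] A →ₗ[K] M :=
  (TensorProduct.rid K M).toLinearMap ∘ₗ
    (TensorProduct.map (LinearMap.id : M →ₗ[K] M) ε) ∘ₗ
      (TensorProduct.map (LinearMap.id : M →ₗ[K] M) (LinearMap.mul' K A)) ∘ₗ
        (TensorProduct.assoc K M A A).toLinearMap ∘ₗ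
          (TensorProduct.map co (LinearMap.id : A →ₗ[K] A))

theorem LinearMap.rTensor_toSpanSingleton_apply {R M N : Type*} [CommSemiring R]
    [AddCommMonoid M] [Module R M] [AddCommMonoid N] [Module R N] (m : M) (s : R ⊗[R] N) :
    (LinearMap.toSpanSingleton R M m).rTensor N s = m ⊗ₜ TensorProduct.lid R N s := by
  induction s using TensorProduct.induction_on with
  | zero => simp
  | tmul r n => simp [smul_tmul]
  | add s s' hs hs' => simp only [map_add, hs, hs', tmul_add]

section

open LinearMap

variable {K A M : Type*} [Field K] [Ring A] [Algebra K A] [AddCommGroup M] [Module K M]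

theorem nablaOf_apply (δ : A →ₗ[K] A ⊗[K] A) (m : M ⊗[K] A →ₗ[K] M) (x : M) :
    nablaOf δ m x = (m ∘ₗ TensorProduct.mk K M A x).rTensor A (δ 1) := by
  simp only [nablaOf, coe_comp, Function.comp_apply, flip_apply, mk_apply, map_tmul, id_coe,
    id_eq, LinearEquiv.coe_coe]
  induction δ 1 using TensorProduct.induction_on with
  | zero => simp
  | tmul a b => simp
  | add s s' hs hs' => simp only [tmul_add, map_add, hs, hs']

noncomputable def counitPairing (ε : A →ₗ[K] K) : (M ⊗[K] A) ⊗[K] A →ₗ[K] M :=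
  (TensorProduct.rid K M).toLinearMap ∘ₗ lTensor M ε ∘ₗ lTensor M (mul' K A) ∘ₗ
    (TensorProduct.assoc K M A A).toLinearMap

theorem modOf_comp_mk (ε : A →ₗ[K] K) (co : M →ₗ[K] M ⊗[K] A) (x : M) :
    modOf ε co ∘ₗ TensorProduct.mk K M A x =
      counitPairing ε ∘ₗ TensorProduct.mk K (M ⊗[K] A) A (co x) :=
  rfl

theorem counitPairing_comp_mk_tmul (ε : A →ₗ[K] K) (m : M) (a : A) :
    counitPairing ε ∘ₗ TensorProduct.mk K (M ⊗[K] A) A (m ⊗ₜ a) =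
      toSpanSingleton K M m ∘ₗ ε ∘ₗ mulLeft K a := by
  ext e
  simp [counitPairing]

theorem rTensor_counitPairing_comp_mk {δ : A →ₗ[K] A ⊗[K] A} (ε : A →ₗ[K] K)
    (hδ : ∀ a, δ a = (mulLeft K a).rTensor A (δ 1)) (y : M ⊗[K] A) :
    (counitPairing ε ∘ₗ TensorProduct.mk K (M ⊗[K] A) A y).rTensor A (δ 1) =
      lTensor M ((TensorProduct.lid K A).toLinearMap ∘ₗ ε.rTensor A ∘ₗ δ) y := by
  induction y using TensorProduct.induction_on with
  | zero => simp
  | tmul m a =>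
    rw [counitPairing_comp_mk_tmul, rTensor_comp_apply, rTensor_comp_apply, ← hδ,
      rTensor_toSpanSingleton_apply]
    rfl
  | add y y' hy hy' => simp only [map_add, comp_add, rTensor_add, LinearMap.add_apply, hy, hy']

theorem nablaOf_modOf {δ : A →ₗ[K] A ⊗[K] A} (ε : A →ₗ[K] K)
    (hδ : ∀ a, δ a = (mulLeft K a).rTensor A (δ 1)) (co : M →ₗ[K] M ⊗[K] A) :
    nablaOf δ (modOf ε co) =
      lTensor M ((TensorProduct.lid K A).toLinearMap ∘ₗ ε.rTensor A ∘ₗ δ) ∘ₗ co := by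
  ext x
  rw [nablaOf_apply, modOf_comp_mk, rTensor_counitPairing_comp_mk ε hδ]
  rfl

end

theorem comodule_module_comodule_general
    {K : Type*} [Field K] {A : Type*} [Ring A] [Algebra K A]
    (δ : A →ₗ[K] A ⊗[K] A) (ε : A →ₗ[K] K)
    (hcounit_l : ∀ a : A,
      (TensorProduct.lid K A)
          ((TensorProduct.map ε (LinearMap.id : A →ₗ[K] A)) (δ a)) = a)
    (hbimod : ∀ a x b : A,
      δ (a * x * b) =
        (TensorProduct.map (LinearMap.mulLeft K a) (LinearMap.mulRight K b)) (δ x))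
    {M : Type*} [AddCommGroup M] [Module K M] (co : M →ₗ[K] M ⊗[K] A) :
    nablaOf δ (modOf ε co) = co := by
  have hδ : ∀ a, δ a = (LinearMap.mulLeft K a).rTensor A (δ 1) := fun a => by
    simpa [LinearMap.mulRight_one, LinearMap.rTensor] using hbimod a 1 1
  have hcounit : (TensorProduct.lid K A).toLinearMap ∘ₗ ε.rTensor A ∘ₗ δ = LinearMap.id :=
    LinearMap.ext hcounit_l
  rw [nablaOf_modOf ε hδ, hcounit, LinearMap.lTensor_id, LinearMap.id_comp]

/-- Starting from a right `A`-comodule `(M, ∇)` over a Frobenius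
algebra, forming the induced module structure `m_∇` and then the comodule structure
`∇_{m_∇}` induced by `m_∇` recovers `∇`: `∇_{m_∇} = ∇`. -/
theorem comodule_module_comodule
    {K : Type*} [Field K] {A : Type*} [Ring A] [Algebra K A] [FiniteDimensional K A]
    (δ : A →ₗ[K] A ⊗[K] A) (ε : A →ₗ[K] K)
    (hcoassoc : ∀ a : A,
      (TensorProduct.assoc K A A A)
          ((TensorProduct.map δ (LinearMap.id : A →ₗ[K] A)) (δ a)) =
        (TensorProduct.map (LinearMap.id : A →ₗ[K] A) δ) (δ a))
    (hcounit_l : ∀ a : A,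
      (TensorProduct.lid K A)
          ((TensorProduct.map ε (LinearMap.id : A →ₗ[K] A)) (δ a)) = a)
    (hcounit_r : ∀ a : A,
      (TensorProduct.rid K A)
          ((TensorProduct.map (LinearMap.id : A →ₗ[K] A) ε) (δ a)) = a)
    (hbimod : ∀ a x b : A,
      δ (a * x * b) =
        (TensorProduct.map (LinearMap.mulLeft K a) (LinearMap.mulRight K b)) (δ x))
    {M : Type*} [AddCommGroup M] [Module K M] (co : M →ₗ[K] M ⊗[K] A)
    (hco_coassoc : ∀ x : M,
      (TensorProduct.assoc K M A A)
          ((TensorProduct.map co (LinearMap.id : A →ₗ[K] A)) (co x)) =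
        (TensorProduct.map (LinearMap.id : M →ₗ[K] M) δ) (co x))
    (hco_counit : ∀ x : M,
      (TensorProduct.rid K M)
          ((TensorProduct.map (LinearMap.id : M →ₗ[K] M) ε) (co x)) = x) :
    nablaOf δ (modOf ε co) = co :=
  comodule_module_comodule_general δ ε hcounit_l hbimod co
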